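/- For n, r ≥ 1: (i) S_r^−Λ^0(ℝ^n) = S_rΛ^0(ℝ^n); (ii) S_r^−Λ^n(ℝ^n) = S_{r−1}Λ^n(ℝ^n); (iii) S_r^−Λ^k(ℝ^n) + dS_{r+1}Λ^{k−1}(ℝ^n) = S_rΛ^k(ℝ^n). -/

import Mathlib

open MvPolynomial

/-- Polynomial differential forms on `ℝ^n`: a family of polynomial coefficients indexed by
subsets `σ ⊆ {1,…,n}`; a `k`-form is supported on sets of cardinality `k`. -/
abbrev PolyForm (n : ℕ) := Finset (Fin n) → MvPolynomial (Fin n) ℝ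

/-- The sign `(-1)^{#{j ∈ σ : j < i}}`. -/
noncomputable def sgn {n : ℕ} (σ : Finset (Fin n)) (i : Fin n) : MvPolynomial (Fin n) ℝ :=
  (-1) ^ (σ.filter (fun j => j < i)).card

/-- The exterior derivative `d`. -/
noncomputable def extD (n : ℕ) : PolyForm n →ₗ[ℝ] PolyForm n where
  toFun ω := fun σ => ∑ i ∈ σ, sgn σ i * pderiv i (ω (σ.erase i))
  map_add' ω η := by
    funext σ
    simp [Pi.add_apply, mul_add, Finset.sum_add_distrib]
  map_smul' c ω := by
    funext σ
    simp [Pi.smul_apply, Finset.smul_sum, mul_smul_comm]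

/-- The Koszul operator `κ` (contraction with the position vector field). -/
noncomputable def koszul (n : ℕ) : PolyForm n →ₗ[ℝ] PolyForm n where
  toFun ω := fun σ => ∑ i ∈ σᶜ, sgn σ i * X i * ω (insert i σ)
  map_add' ω η := by
    funext σ
    simp [Pi.add_apply, mul_add, Finset.sum_add_distrib]
  map_smul' c ω := by
    funext σ
    simp [Pi.smul_apply, Finset.smul_sum, mul_smul_comm]

/-- The space of (polynomial) differential `k`-forms: families supported on index sets of
cardinality `k`. -/
noncomputable def Lambda (n k : ℕ) : Submodule ℝ (PolyForm n) where
  carrier := {ω | ∀ σ, σ.card ≠ k → ω σ = 0}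
  zero_mem' := fun σ _ => rfl
  add_mem' := fun ha hb σ h => by simp only [Pi.add_apply, ha σ h, hb σ h, add_zero]
  smul_mem' := fun c ω h σ hσ => by simp only [Pi.smul_apply, h σ hσ, smul_zero]

/-- The form monomial `x^α dx_σ`. -/
noncomputable def formMonomial {n : ℕ} (α : Fin n →₀ ℕ) (σ : Finset (Fin n)) : PolyForm n :=
  fun τ => if τ = σ then monomial α 1 else 0

/-- The (total) degree `|α|` of a multi-index. -/
def mdeg {n : ℕ} (α : Fin n →₀ ℕ) : ℕ := α.sum fun _ m => m

/-- The linear degree of the form monomial `x^α dx_σ`: the number of `i ∉ σ` with `α i = 1`. -/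
def ldeg {n : ℕ} (α : Fin n →₀ ℕ) (σ : Finset (Fin n)) : ℕ :=
  ((σᶜ).filter fun i => α i = 1).card

/-- `H_rΛ^k(ℝ^n)`: `k`-forms with homogeneous degree-`r` polynomial coefficients. -/
noncomputable def Hspace (n r k : ℕ) : Submodule ℝ (PolyForm n) :=
  Submodule.span ℝ {ω | ∃ α σ, σ.card = k ∧ mdeg α = r ∧ ω = formMonomial α σ}

/-- `P_rΛ^k(ℝ^n)`: `k`-forms with polynomial coefficients of degree at most `r`. -/
noncomputable def Pspace (n r k : ℕ) : Submodule ℝ (PolyForm n) :=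
  Submodule.span ℝ {ω | ∃ α σ, σ.card = k ∧ mdeg α ≤ r ∧ ω = formMonomial α σ}

/-- `H_{r,l}Λ^k(ℝ^n)`: homogeneous degree-`r` `k`-forms of linear degree at least `l`. -/
noncomputable def Hl (n r l k : ℕ) : Submodule ℝ (PolyForm n) :=
  Submodule.span ℝ
    {ω | ∃ α σ, σ.card = k ∧ mdeg α = r ∧ l ≤ ldeg α σ ∧ ω = formMonomial α σ}

/-- `J_rΛ^k(ℝ^n) := Σ_{l ≥ 1} κ H_{r+l-1, l}Λ^{k+1}(ℝ^n)` (here `l` is reindexed as `l+1`). -/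
noncomputable def Jspace (n r k : ℕ) : Submodule ℝ (PolyForm n) :=
  ⨆ l : ℕ, Submodule.map (koszul n) (Hl n (r + l) (l + 1) (k + 1))

/-- The trimmed polynomial space `P_r^-Λ^k := P_{r-1}Λ^k ⊕ κ H_{r-1}Λ^{k+1}`. -/
noncomputable def PminusSpace (n r k : ℕ) : Submodule ℝ (PolyForm n) :=
  Pspace n (r - 1) k ⊔ Submodule.map (koszul n) (Hspace n (r - 1) (k + 1))

/-- The serendipity space `S_rΛ^k := P_rΛ^k + J_rΛ^k + d J_{r+1}Λ^{k-1}`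
(the last summand being absent for `k = 0`). -/
noncomputable def Sspace (n r k : ℕ) : Submodule ℝ (PolyForm n) :=
  Pspace n r k ⊔ Jspace n r k ⊔
    (if k = 0 then ⊥ else Submodule.map (extD n) (Jspace n (r + 1) (k - 1)))

/-- The trimmed serendipity space `S_r^-Λ^k := S_{r-1}Λ^k + κ S_{r-1}Λ^{k+1}`. -/
noncomputable def SminusSpace (n r k : ℕ) : Submodule ℝ (PolyForm n) :=
  Sspace n (r - 1) k ⊔ Submodule.map (koszul n) (Sspace n (r - 1) (k + 1))

/-!
The Koszul operator and the exterior derivative satisfy `κκ = 0`, `dd = 0` and the homotopy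
formula `(dκ + κd) ω = (r + k) ω` for a `k`-form `ω` with homogeneous coefficients of degree `r`.
Hence `κ S_{r-1} ⊆ S_r`, `d S_{r+1} ⊆ S_r` and `S_{r-1} ⊆ S_r`, which gives one inclusion.
For the other, the homotopy formula splits `P_{r+1}Λ^k` into `d P_{r+2}Λ^{k-1} + κ P_rΛ^{k+1}`,
and it writes `J_{r+1}Λ^k` inside `κ d J_{r+1}Λ^k ⊆ κ S_rΛ^{k+1}`. Part (ii) holds because there
are no nonzero `(n+1)`-forms on `ℝ^n`.
-/

open Finset

theorem Finset.sum_sum_erase_eq_zero_of_antisymm {ι M : Type*} [DecidableEq ι] [AddCommGroup M]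
    (s : Finset ι) (f : ι → ι → M) (h : ∀ i ∈ s, ∀ j ∈ s, i ≠ j → f i j = -f j i) :
    ∑ i ∈ s, ∑ j ∈ s.erase i, f i j = 0 := by
  rw [sum_sigma']
  refine sum_involution (fun x _ => ⟨x.2, x.1⟩) (fun x hx => ?_) (fun x hx _ hswap => ?_)
    (fun x hx => ?_) (fun _ _ => rfl)
  · simp only [mem_sigma, mem_erase] at hx
    rw [h _ hx.1 _ hx.2.2 (Ne.symm hx.2.1), neg_add_cancel]
  · simp only [mem_sigma, mem_erase] at hx
    exact hx.2.1 (congrArg Sigma.fst hswap)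
  · simp only [mem_sigma, mem_erase] at hx ⊢
    exact ⟨hx.2.2, Ne.symm hx.2.1, hx.1⟩

theorem MvPolynomial.pderiv_pderiv_comm {R ι : Type*} [CommSemiring R] (i j : ι)
    (p : MvPolynomial ι R) : pderiv i (pderiv j p) = pderiv j (pderiv i p) := by
  induction p using MvPolynomial.induction_on' with
  | monomial s a =>
    simp only [pderiv_monomial]
    by_cases hij : i = j
    · rw [hij]
    · rw [tsub_right_comm (a := s)]
      congr 1
      rw [Finsupp.tsub_apply, Finsupp.tsub_apply, Finsupp.single_eq_of_ne hij,
        Finsupp.single_eq_of_ne (Ne.symm hij), tsub_zero, tsub_zero]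
      ring
  | add p q hp hq => simp only [map_add, hp, hq]

section Signs

variable {n : ℕ} {σ : Finset (Fin n)} {i j : Fin n}

noncomputable def rsgn (σ : Finset (Fin n)) (i : Fin n) : ℝ :=
  (-1) ^ #{j ∈ σ | j < i}

theorem sgn_eq_C_rsgn (σ : Finset (Fin n)) (i : Fin n) : sgn σ i = C (rsgn σ i) := by
  simp [sgn, rsgn]

theorem rsgn_mul_self (σ : Finset (Fin n)) (i : Fin n) : rsgn σ i * rsgn σ i = 1 := by
  rw [rsgn, ← pow_add, ← two_mul, pow_mul]
  norm_num

theorem rsgn_insert_self (σ : Finset (Fin n)) (i : Fin n) : rsgn (insert i σ) i = rsgn σ i := by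
  rw [rsgn, rsgn, filter_insert, if_neg (lt_irrefl i)]

theorem rsgn_erase_self (σ : Finset (Fin n)) (i : Fin n) : rsgn (σ.erase i) i = rsgn σ i := by
  rw [rsgn, rsgn, filter_erase, erase_eq_of_notMem (by simp)]

theorem rsgn_insert (hi : i ∉ σ) (j : Fin n) :
    rsgn (insert i σ) j = (if i < j then -1 else 1) * rsgn σ j := by
  rw [rsgn, rsgn, filter_insert]
  split_ifs with h
  · rw [card_insert_of_notMem (fun h' => hi (mem_filter.mp h').1), pow_succ, mul_comm]
  · rw [one_mul]

theorem rsgn_erase (hi : i ∈ σ) (j : Fin n) :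
    rsgn (σ.erase i) j = (if i < j then -1 else 1) * rsgn σ j := by
  conv_rhs => rw [← insert_erase hi, rsgn_insert (notMem_erase i σ)]
  split_ifs <;> ring

theorem ite_lt_add_ite_lt (hij : i ≠ j) :
    ((if i < j then -1 else 1) : ℝ) + (if j < i then -1 else 1) = 0 := by
  rcases hij.lt_or_gt with h | h <;> simp [h, h.not_gt]

theorem rsgn_mul_rsgn_insert (hi : i ∉ σ) (hj : j ∉ σ) (hij : i ≠ j) :
    rsgn σ i * rsgn (insert i σ) j = -(rsgn σ j * rsgn (insert j σ) i) := by
  rw [rsgn_insert hi, rsgn_insert hj]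
  linear_combination (rsgn σ i * rsgn σ j) * ite_lt_add_ite_lt hij

theorem rsgn_mul_rsgn_erase (hi : i ∈ σ) (hj : j ∈ σ) (hij : i ≠ j) :
    rsgn σ i * rsgn (σ.erase i) j = -(rsgn σ j * rsgn (σ.erase j) i) := by
  rw [rsgn_erase hi, rsgn_erase hj]
  linear_combination (rsgn σ i * rsgn σ j) * ite_lt_add_ite_lt hij

theorem rsgn_mul_rsgn_insert_of_mem (hi : i ∈ σ) (hj : j ∉ σ) :
    rsgn σ j * rsgn (insert j σ) i = -(rsgn σ i * rsgn (σ.erase i) j) := by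
  have hij : i ≠ j := fun h => hj (h ▸ hi)
  rw [rsgn_insert hj, rsgn_erase hi]
  linear_combination (rsgn σ i * rsgn σ j) * ite_lt_add_ite_lt hij

end Signs

section Operators

variable {n : ℕ}

theorem formMonomial_apply (α : Fin n →₀ ℕ) (σ τ : Finset (Fin n)) :
    formMonomial α σ τ = if τ = σ then monomial α 1 else 0 := rfl

theorem koszul_apply (ω : PolyForm n) (τ : Finset (Fin n)) :
    koszul n ω τ = ∑ i ∈ τᶜ, sgn τ i * X i * ω (insert i τ) := rfl

theorem extD_apply (ω : PolyForm n) (τ : Finset (Fin n)) :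
    extD n ω τ = ∑ i ∈ τ, sgn τ i * pderiv i (ω (τ.erase i)) := rfl

theorem koszul_formMonomial (α : Fin n →₀ ℕ) (σ : Finset (Fin n)) :
    koszul n (formMonomial α σ) =
      ∑ i ∈ σ, rsgn σ i • formMonomial (α + Finsupp.single i 1) (σ.erase i) := by
  funext τ
  have hsupp : {i ∈ τᶜ | insert i τ = σ} = {i ∈ σ | τ = σ.erase i} := by
    ext i
    simp only [mem_filter, mem_compl]
    constructor
    · rintro ⟨hi, rfl⟩
      exact ⟨mem_insert_self i τ, (erase_insert hi).symm⟩
    · rintro ⟨hi, rfl⟩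
      exact ⟨notMem_erase i σ, insert_erase hi⟩
  simp only [koszul_apply, Finset.sum_apply, Pi.smul_apply, formMonomial_apply, mul_ite,
    mul_zero, smul_ite, smul_zero, ← sum_filter, hsupp]
  refine sum_congr rfl fun i hi => ?_
  obtain ⟨hiσ, rfl⟩ := mem_filter.mp hi
  rw [sgn_eq_C_rsgn, rsgn_erase_self, X, smul_eq_C_mul, mul_assoc,
    monomial_mul, one_mul, add_comm α]

theorem extD_formMonomial (α : Fin n →₀ ℕ) (σ : Finset (Fin n)) :
    extD n (formMonomial α σ) =
      ∑ i ∈ σᶜ, ((α i : ℝ) * rsgn σ i) • formMonomial (α - Finsupp.single i 1) (insert i σ) := by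
  funext τ
  have hsupp : {i ∈ τ | τ.erase i = σ} = {i ∈ σᶜ | τ = insert i σ} := by
    ext i
    simp only [mem_filter, mem_compl]
    constructor
    · rintro ⟨hi, rfl⟩
      exact ⟨notMem_erase i τ, (insert_erase hi).symm⟩
    · rintro ⟨hi, rfl⟩
      exact ⟨mem_insert_self i σ, erase_insert hi⟩
  simp only [extD_apply, Finset.sum_apply, Pi.smul_apply, formMonomial_apply, apply_ite,
    map_zero, mul_zero, smul_zero, ← sum_filter, hsupp]
  refine sum_congr rfl fun i hi => ?_
  obtain ⟨hiσ, rfl⟩ := mem_filter.mp hi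
  rw [sgn_eq_C_rsgn, rsgn_insert_self, pderiv_monomial, smul_eq_C_mul, C_mul_monomial,
    C_mul_monomial]
  ring_nf

theorem koszul_koszul (ω : PolyForm n) : koszul n (koszul n ω) = 0 := by
  funext τ
  simp only [koszul_apply, compl_insert, mul_sum, Pi.zero_apply]
  refine sum_sum_erase_eq_zero_of_antisymm _ _ fun i hi j hj hij => ?_
  have hsign := congrArg (C : ℝ → MvPolynomial (Fin n) ℝ)
    (rsgn_mul_rsgn_insert (mem_compl.mp hi) (mem_compl.mp hj) hij)
  simp only [map_mul, map_neg] at hsign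
  rw [sgn_eq_C_rsgn, sgn_eq_C_rsgn, sgn_eq_C_rsgn, sgn_eq_C_rsgn, insert_comm i j]
  linear_combination (X i * X j * ω (insert j (insert i τ))) * hsign

theorem extD_extD (ω : PolyForm n) : extD n (extD n ω) = 0 := by
  funext τ
  simp only [extD_apply, sgn_eq_C_rsgn, map_sum, pderiv_C_mul, mul_sum, Pi.zero_apply]
  refine sum_sum_erase_eq_zero_of_antisymm _ _ fun i hi j hj hij => ?_
  have hsign := congrArg (C : ℝ → MvPolynomial (Fin n) ℝ) (rsgn_mul_rsgn_erase hi hj hij)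
  simp only [map_mul, map_neg] at hsign
  rw [pderiv_pderiv_comm i j, erase_right_comm (a := i)]
  linear_combination (pderiv j (pderiv i (ω ((τ.erase j).erase i)))) * hsign

end Operators

section Homotopy

variable {n : ℕ}

theorem mdeg_eq_sum (α : Fin n →₀ ℕ) : mdeg α = ∑ i, α i :=
  Finsupp.degree_eq_sum α

/-- The terms of `dκ(x^α dx_σ)` exchanging `dx_i` (`i ∈ σ`) for `dx_j` (`j ∉ σ`); they reappear
with the opposite sign in `κd(x^α dx_σ)`. -/
noncomputable def crossTerm (α : Fin n →₀ ℕ) (σ : Finset (Fin n)) (i j : Fin n) : PolyForm n :=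
  ((α j : ℝ) * (rsgn σ i * rsgn (σ.erase i) j)) •
    formMonomial (α + Finsupp.single i 1 - Finsupp.single j 1) (insert j (σ.erase i))

theorem extD_koszul_formMonomial (α : Fin n →₀ ℕ) (σ : Finset (Fin n)) :
    extD n (koszul n (formMonomial α σ)) =
      (∑ i ∈ σ, ((α i : ℝ) + 1)) • formMonomial α σ + ∑ i ∈ σ, ∑ j ∈ σᶜ, crossTerm α σ i j := by
  rw [koszul_formMonomial, map_sum, sum_smul, ← sum_add_distrib]
  refine sum_congr rfl fun i hi => ?_
  rw [map_smul, extD_formMonomial, compl_erase, sum_insert (by simpa using hi), smul_add,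
    smul_sum, insert_erase hi, add_tsub_cancel_right, smul_smul, rsgn_erase_self]
  congr 1
  · rw [Finsupp.add_apply, Finsupp.single_eq_same]
    congr 1
    push_cast
    linear_combination ((α i : ℝ) + 1) * rsgn_mul_self σ i
  · refine sum_congr rfl fun j hj => ?_
    have hji : j ≠ i := fun h => mem_compl.mp hj (h ▸ hi)
    rw [smul_smul, crossTerm, Finsupp.add_apply, Finsupp.single_eq_of_ne hji, add_zero]
    ring_nf

theorem koszul_extD_formMonomial (α : Fin n →₀ ℕ) (σ : Finset (Fin n)) :
    koszul n (extD n (formMonomial α σ)) =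
      (∑ j ∈ σᶜ, (α j : ℝ)) • formMonomial α σ - ∑ i ∈ σ, ∑ j ∈ σᶜ, crossTerm α σ i j := by
  rw [extD_formMonomial, map_sum, sum_comm (s := σ), sum_smul, ← sum_sub_distrib]
  refine sum_congr rfl fun j hj => ?_
  have hjσ : j ∉ σ := mem_compl.mp hj
  rw [map_smul, koszul_formMonomial, sum_insert hjσ, erase_insert hjσ, smul_add, smul_sum,
    smul_smul, rsgn_insert_self, sub_eq_add_neg, ← sum_neg_distrib]
  congr 1
  · by_cases hαj : α j = 0
    · simp [hαj]
    · rw [tsub_add_cancel_of_le (Finsupp.single_le_iff.mpr (Nat.one_le_iff_ne_zero.mpr hαj))]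
      congr 1
      linear_combination (α j : ℝ) * rsgn_mul_self σ j
  · refine sum_congr rfl fun i hi => ?_
    have hji : j ≠ i := fun h => hjσ (h ▸ hi)
    have hexp : α - Finsupp.single j 1 + Finsupp.single i 1 =
        α + Finsupp.single i 1 - Finsupp.single j 1 := by
      ext a
      simp only [Finsupp.add_apply, Finsupp.tsub_apply, Finsupp.single_apply]
      split_ifs <;> omega
    rw [smul_smul, erase_insert_of_ne hji, hexp, crossTerm, ← neg_smul]
    congr 1
    linear_combination (α j : ℝ) * rsgn_mul_rsgn_insert_of_mem hi hjσ

theorem extD_koszul_add_koszul_extD_formMonomial (α : Fin n →₀ ℕ) (σ : Finset (Fin n)) :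
    extD n (koszul n (formMonomial α σ)) + koszul n (extD n (formMonomial α σ)) =
      ((mdeg α + #σ : ℕ) : ℝ) • formMonomial α σ := by
  rw [extD_koszul_formMonomial, koszul_extD_formMonomial, add_add_sub_cancel, ← add_smul,
    sum_add_distrib, sum_const, add_right_comm, sum_add_sum_compl, mdeg_eq_sum]
  push_cast
  ring_nf

theorem koszul_extD_koszul_formMonomial (α : Fin n →₀ ℕ) (σ : Finset (Fin n)) :
    koszul n (extD n (koszul n (formMonomial α σ))) =
      ((mdeg α + #σ : ℕ) : ℝ) • koszul n (formMonomial α σ) := by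
  rw [eq_sub_of_add_eq (extD_koszul_add_koszul_extD_formMonomial α σ), map_sub, map_smul,
    koszul_koszul, sub_zero]

end Homotopy

section Spaces

variable {n : ℕ}

theorem mdeg_add_single (α : Fin n →₀ ℕ) (i : Fin n) :
    mdeg (α + Finsupp.single i 1) = mdeg α + 1 := by
  simp [mdeg_eq_sum, sum_add_distrib, Finsupp.single_apply]

theorem mdeg_tsub_single_add_one {α : Fin n →₀ ℕ} {i : Fin n} (hi : α i ≠ 0) :
    mdeg (α - Finsupp.single i 1) + 1 = mdeg α := by
  rw [← mdeg_add_single,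
    tsub_add_cancel_of_le (Finsupp.single_le_iff.mpr (Nat.one_le_iff_ne_zero.mpr hi))]

theorem Pspace_le {r k : ℕ} {M : Submodule ℝ (PolyForm n)}
    (h : ∀ α σ, #σ = k → mdeg α ≤ r → formMonomial α σ ∈ M) : Pspace n r k ≤ M :=
  Submodule.span_le.mpr <| by rintro _ ⟨α, σ, hσ, hα, rfl⟩; exact h α σ hσ hα

theorem formMonomial_mem_Pspace {r k : ℕ} {α : Fin n →₀ ℕ} {σ : Finset (Fin n)}
    (hσ : #σ = k) (hα : mdeg α ≤ r) : formMonomial α σ ∈ Pspace n r k :=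
  Submodule.subset_span ⟨α, σ, hσ, hα, rfl⟩

theorem Pspace_mono {r r' k : ℕ} (h : r ≤ r') : Pspace n r k ≤ Pspace n r' k :=
  Pspace_le fun _ _ hσ hα => formMonomial_mem_Pspace hσ (hα.trans h)

theorem Pspace_eq_bot {r k : ℕ} (hk : n < k) : Pspace n r k = ⊥ :=
  eq_bot_iff.mpr <| Pspace_le fun _ σ hσ _ => absurd (card_finset_fin_le σ) (by omega)

theorem koszul_formMonomial_mem_Pspace {r k : ℕ} {α : Fin n →₀ ℕ} {σ : Finset (Fin n)}
    (hσ : #σ = k + 1) (hα : mdeg α ≤ r) : koszul n (formMonomial α σ) ∈ Pspace n (r + 1) k := by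
  rw [koszul_formMonomial]
  refine Submodule.sum_mem _ fun i hi => Submodule.smul_mem _ _ (formMonomial_mem_Pspace ?_ ?_)
  · rw [card_erase_of_mem hi, hσ, Nat.add_sub_cancel]
  · rw [mdeg_add_single]
    omega

theorem extD_formMonomial_mem_Pspace {r k : ℕ} {α : Fin n →₀ ℕ} {σ : Finset (Fin n)}
    (hσ : #σ = k) (hα : mdeg α ≤ r + 1) : extD n (formMonomial α σ) ∈ Pspace n r (k + 1) := by
  rw [extD_formMonomial]
  refine Submodule.sum_mem _ fun i hi => ?_
  by_cases hαi : α i = 0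
  · simp [hαi]
  · refine Submodule.smul_mem _ _ (formMonomial_mem_Pspace ?_ ?_)
    · rw [card_insert_of_notMem (mem_compl.mp hi), hσ]
    · have := mdeg_tsub_single_add_one hαi
      omega

theorem map_koszul_Pspace_le {r k : ℕ} :
    (Pspace n r (k + 1)).map (koszul n) ≤ Pspace n (r + 1) k :=
  Submodule.map_le_iff_le_comap.mpr <| Pspace_le fun _ _ => koszul_formMonomial_mem_Pspace

theorem map_extD_Pspace_le {r k : ℕ} :
    (Pspace n (r + 1) k).map (extD n) ≤ Pspace n r (k + 1) :=
  Submodule.map_le_iff_le_comap.mpr <| Pspace_le fun _ _ => extD_formMonomial_mem_Pspace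

end Spaces

section Serendipity

variable {n : ℕ}

theorem koszul_formMonomial_mem_Jspace {r k l : ℕ} {α : Fin n →₀ ℕ} {σ : Finset (Fin n)}
    (hσ : #σ = k + 1) (hα : mdeg α = r + l) (hl : l + 1 ≤ ldeg α σ) :
    koszul n (formMonomial α σ) ∈ Jspace n r k :=
  le_iSup (fun l => (Hl n (r + l) (l + 1) (k + 1)).map (koszul n)) l <|
    Submodule.mem_map_of_mem <| Submodule.subset_span ⟨α, σ, hσ, hα, hl, rfl⟩

theorem Jspace_le {r k : ℕ} {M : Submodule ℝ (PolyForm n)}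
    (h : ∀ l α σ, #σ = k + 1 → mdeg α = r + l → l + 1 ≤ ldeg α σ →
      koszul n (formMonomial α σ) ∈ M) :
    Jspace n r k ≤ M :=
  iSup_le fun l => Submodule.map_le_iff_le_comap.mpr <| Submodule.span_le.mpr <| by
    rintro _ ⟨α, σ, hσ, hα, hl, rfl⟩
    exact h l α σ hσ hα hl

theorem Jspace_eq_bot {r k : ℕ} (hk : n ≤ k) : Jspace n r k = ⊥ :=
  eq_bot_iff.mpr <| Jspace_le fun _ _ σ hσ _ _ => absurd (card_finset_fin_le σ) (by omega)

theorem Jspace_le_Pspace_sup_Jspace {r k : ℕ} :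
    Jspace n r k ≤ Pspace n (r + 1) k ⊔ Jspace n (r + 1) k := by
  refine Jspace_le fun l α σ hσ hα hl => ?_
  cases l with
  | zero => exact Submodule.mem_sup_left (koszul_formMonomial_mem_Pspace hσ hα.le)
  | succ l =>
    exact Submodule.mem_sup_right
      (koszul_formMonomial_mem_Jspace (l := l) hσ (by rw [hα]; ring) (by omega))

theorem map_koszul_Jspace {r k : ℕ} : (Jspace n r k).map (koszul n) = ⊥ :=
  eq_bot_iff.mpr <| Submodule.map_le_iff_le_comap.mpr <|
    Jspace_le fun _ _ _ _ _ _ => by simp [koszul_koszul]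

theorem map_koszul_map_extD_Jspace_le {r k : ℕ} :
    ((Jspace n r k).map (extD n)).map (koszul n) ≤ Jspace n r k := by
  rw [Submodule.map_le_iff_le_comap, Submodule.map_le_iff_le_comap]
  refine Jspace_le fun l α σ hσ hα hl => ?_
  simp only [Submodule.mem_comap]
  rw [koszul_extD_koszul_formMonomial]
  exact Submodule.smul_mem _ _ (koszul_formMonomial_mem_Jspace hσ hα hl)

theorem map_extD_map_extD (M : Submodule ℝ (PolyForm n)) : (M.map (extD n)).map (extD n) = ⊥ := by
  rw [← Submodule.map_comp, show extD n ∘ₗ extD n = 0 from LinearMap.ext extD_extD,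
    Submodule.map_zero]

theorem Sspace_zero (r : ℕ) : Sspace n r 0 = Pspace n r 0 ⊔ Jspace n r 0 := by
  simp [Sspace]

theorem Sspace_succ (r k : ℕ) :
    Sspace n r (k + 1) =
      Pspace n r (k + 1) ⊔ Jspace n r (k + 1) ⊔ (Jspace n (r + 1) k).map (extD n) := by
  simp [Sspace]

theorem Sspace_le_sup (r k : ℕ) :
    Sspace n r k ≤ Pspace n r k ⊔ Jspace n r k ⊔ (Jspace n (r + 1) (k - 1)).map (extD n) :=
  sup_le_sup_left (by split_ifs <;> simp) _

theorem Pspace_le_Sspace {r k : ℕ} : Pspace n r k ≤ Sspace n r k :=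
  le_sup_left.trans le_sup_left

theorem Jspace_le_Sspace {r k : ℕ} : Jspace n r k ≤ Sspace n r k :=
  le_sup_right.trans le_sup_left

theorem map_extD_Jspace_le_Sspace {r k : ℕ} :
    (Jspace n (r + 1) k).map (extD n) ≤ Sspace n r (k + 1) := by
  rw [Sspace_succ]
  exact le_sup_right

theorem Jspace_le_Sspace_succ {r k : ℕ} : Jspace n r k ≤ Sspace n (r + 1) k :=
  Jspace_le_Pspace_sup_Jspace.trans (sup_le Pspace_le_Sspace Jspace_le_Sspace)

theorem Sspace_eq_bot {r k : ℕ} (hk : n < k) : Sspace n r k = ⊥ :=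
  eq_bot_iff.mpr <| (Sspace_le_sup r k).trans <| by
    rw [Pspace_eq_bot hk, Jspace_eq_bot hk.le, Jspace_eq_bot (by omega), Submodule.map_bot]
    simp

theorem map_extD_Sspace_le {r k : ℕ} : (Sspace n (r + 1) k).map (extD n) ≤ Sspace n r (k + 1) := by
  refine (Submodule.map_mono (Sspace_le_sup _ _)).trans ?_
  rw [Submodule.map_sup, Submodule.map_sup, map_extD_map_extD, sup_bot_eq]
  exact sup_le (map_extD_Pspace_le.trans Pspace_le_Sspace) map_extD_Jspace_le_Sspace

theorem map_koszul_Sspace_le {r k : ℕ} :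
    (Sspace n r (k + 1)).map (koszul n) ≤ Sspace n (r + 1) k := by
  rw [Sspace_succ, Submodule.map_sup, Submodule.map_sup, map_koszul_Jspace, sup_bot_eq]
  exact sup_le (map_koszul_Pspace_le.trans Pspace_le_Sspace)
    (map_koszul_map_extD_Jspace_le.trans Jspace_le_Sspace)

theorem Sspace_le_Sspace_succ {r k : ℕ} : Sspace n r k ≤ Sspace n (r + 1) k := by
  have hPJ : Pspace n r k ⊔ Jspace n r k ≤ Sspace n (r + 1) k :=
    sup_le ((Pspace_mono r.le_succ).trans Pspace_le_Sspace) Jspace_le_Sspace_succ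
  cases k with
  | zero => rwa [Sspace_zero]
  | succ k =>
    rw [Sspace_succ]
    exact sup_le hPJ ((Submodule.map_mono Jspace_le_Sspace_succ).trans map_extD_Sspace_le)

theorem Jspace_succ_le_map_koszul_Sspace {r k : ℕ} :
    Jspace n (r + 1) k ≤ (Sspace n r (k + 1)).map (koszul n) := by
  refine Jspace_le fun l α σ hσ hα hl => ?_
  have hN : ((mdeg α + #σ : ℕ) : ℝ) ≠ 0 := Nat.cast_ne_zero.mpr (by omega)
  have hdκ : extD n (koszul n (formMonomial α σ)) ∈ Sspace n r (k + 1) :=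
    map_extD_Jspace_le_Sspace
      (Submodule.mem_map_of_mem (koszul_formMonomial_mem_Jspace hσ hα hl))
  refine ⟨_, Submodule.smul_mem _ ((mdeg α + #σ : ℕ) : ℝ)⁻¹ hdκ, ?_⟩
  rw [map_smul, koszul_extD_koszul_formMonomial, smul_smul, inv_mul_cancel₀ hN, one_smul]

theorem Pspace_succ_zero_le (r : ℕ) :
    Pspace n (r + 1) 0 ≤ Pspace n r 0 ⊔ (Pspace n r 1).map (koszul n) := by
  refine Pspace_le fun α σ hσ hα => ?_
  obtain rfl : σ = ∅ := card_eq_zero.mp hσ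
  rcases Nat.eq_zero_or_pos (mdeg α) with hconst | hpos
  · exact Submodule.mem_sup_left (formMonomial_mem_Pspace rfl (by omega))
  · have hhom := extD_koszul_add_koszul_extD_formMonomial α ∅
    rw [koszul_formMonomial, sum_empty, map_zero, zero_add, card_empty, add_zero] at hhom
    refine Submodule.mem_sup_right ⟨(mdeg α : ℝ)⁻¹ • extD n (formMonomial α ∅),
      Submodule.smul_mem _ _ (extD_formMonomial_mem_Pspace rfl hα), ?_⟩
    rw [map_smul, hhom, smul_smul, inv_mul_cancel₀ (Nat.cast_ne_zero.mpr hpos.ne'), one_smul]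

theorem Pspace_succ_succ_le (r k : ℕ) :
    Pspace n (r + 1) (k + 1) ≤
      (Pspace n (r + 2) k).map (extD n) ⊔ (Pspace n r (k + 2)).map (koszul n) := by
  refine Pspace_le fun α σ hσ hα => ?_
  have hN : ((mdeg α + #σ : ℕ) : ℝ) ≠ 0 := Nat.cast_ne_zero.mpr (by omega)
  have hdecomp : formMonomial α σ =
      extD n (((mdeg α + #σ : ℕ) : ℝ)⁻¹ • koszul n (formMonomial α σ)) +
        koszul n (((mdeg α + #σ : ℕ) : ℝ)⁻¹ • extD n (formMonomial α σ)) := by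
    rw [map_smul, map_smul, ← smul_add, extD_koszul_add_koszul_extD_formMonomial, smul_smul,
      inv_mul_cancel₀ hN, one_smul]
  rw [hdecomp]
  exact Submodule.add_mem_sup
    (Submodule.mem_map_of_mem (Submodule.smul_mem _ _ (koszul_formMonomial_mem_Pspace hσ hα)))
    (Submodule.mem_map_of_mem (Submodule.smul_mem _ _ (extD_formMonomial_mem_Pspace hσ hα)))

theorem SminusSpace_succ (r k : ℕ) :
    SminusSpace n (r + 1) k = Sspace n r k ⊔ (Sspace n r (k + 1)).map (koszul n) :=
  rfl

theorem SminusSpace_succ_zero (r : ℕ) : SminusSpace n (r + 1) 0 = Sspace n (r + 1) 0 := by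
  refine le_antisymm (sup_le Sspace_le_Sspace_succ map_koszul_Sspace_le) ?_
  rw [Sspace_zero, SminusSpace_succ]
  exact sup_le
    ((Pspace_succ_zero_le r).trans
      (sup_le_sup Pspace_le_Sspace (Submodule.map_mono Pspace_le_Sspace)))
    (Jspace_succ_le_map_koszul_Sspace.trans le_sup_right)

theorem SminusSpace_succ_sup_map_extD (r k : ℕ) :
    SminusSpace n (r + 1) (k + 1) ⊔ (Sspace n (r + 2) k).map (extD n) =
      Sspace n (r + 1) (k + 1) := by
  refine le_antisymm
    (sup_le (sup_le Sspace_le_Sspace_succ map_koszul_Sspace_le) map_extD_Sspace_le) ?_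
  rw [Sspace_succ, SminusSpace_succ]
  refine sup_le (sup_le ?_ ?_) ?_
  · exact (Pspace_succ_succ_le r k).trans (sup_le
      ((Submodule.map_mono Pspace_le_Sspace).trans le_sup_right)
      ((Submodule.map_mono Pspace_le_Sspace).trans (le_sup_right.trans le_sup_left)))
  · exact Jspace_succ_le_map_koszul_Sspace.trans (le_sup_right.trans le_sup_left)
  · exact (Submodule.map_mono Jspace_le_Sspace).trans le_sup_right

end Serendipity

theorem Sminus_alternatives_general (n r : ℕ) (hr : 1 ≤ r) :
    SminusSpace n r 0 = Sspace n r 0 ∧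
    SminusSpace n r n = Sspace n (r - 1) n ∧
    (∀ k, SminusSpace n r k ⊔
      (if k = 0 then ⊥ else Submodule.map (extD n) (Sspace n (r + 1) (k - 1))) =
      Sspace n r k) := by
  obtain ⟨r, rfl⟩ := Nat.exists_eq_add_of_le' hr
  refine ⟨SminusSpace_succ_zero r, ?_, ?_⟩
  · rw [SminusSpace_succ, Sspace_eq_bot n.lt_succ_self, Submodule.map_bot, sup_bot_eq,
      Nat.add_sub_cancel]
  · rintro (_ | k)
    · simpa using SminusSpace_succ_zero r
    · simpa using SminusSpace_succ_sup_map_extD r k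

/-- (i) `S_r^-Λ^0 = S_rΛ^0`; (ii) `S_r^-Λ^n = S_{r-1}Λ^n`;
(iii) `S_r^-Λ^k + dS_{r+1}Λ^{k-1} = S_rΛ^k` (the `d`-term being zero for `k = 0`). -/
theorem Sminus_alternatives (n r : ℕ) (hn : 1 ≤ n) (hr : 1 ≤ r) :
    SminusSpace n r 0 = Sspace n r 0 ∧
    SminusSpace n r n = Sspace n (r - 1) n ∧
    (∀ k, SminusSpace n r k ⊔
      (if k = 0 then ⊥ else Submodule.map (extD n) (Sspace n (r + 1) (k - 1))) =
      Sspace n r k) :=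
  Sminus_alternatives_general n r hr
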